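/- arXiv:2311.06399 — 7 statements merged into one kernel-verified Lean document; each statement's English description precedes it below -/
import Mathlib

section
/- With the S-step Runge–Kutta update as defined, the reconstructed conserved quantity satisfies φ(S¹) = φ(S⁰) + Δt • ∑_{k} ⟪∑_i b i • F i U, X̄ k⟫ • X̄ k. In words: the change of the reconstructed conserved quantity over one Runge–Kutta S-step equals Δt times the orthogonal projection of the Runge–Kutta flux ∑_i b i • F i U onto the span of the orthonormal family X̄. -/
open RealInnerProductSpace

/-- One Runge–Kutta S-step of a BUG integrator. The reconstructed
conserved quantity changes by `Δt` times the orthogonal projection of the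
Runge–Kutta flux `∑ i, b i • F i U` onto the span of the orthonormal family `Xbar`. -/
theorem sStep_conserved_projection
    {Hx Hv : Type*} [NormedAddCommGroup Hx] [InnerProductSpace ℝ Hx]
    [NormedAddCommGroup Hv] [InnerProductSpace ℝ Hv]
    {p q s : ℕ} (Xbar : Fin p → Hx) (Vhat : Fin q → Hv)
    (hX : ∀ i j, ⟪Xbar i, Xbar j⟫ = if i = j then 1 else 0)
    (hV : ∀ i j, ⟪Vhat i, Vhat j⟫ = if i = j then 1 else 0)
    (U : Hv) (hU : U = ∑ l, ⟪U, Vhat l⟫ • Vhat l)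
    (F : Fin s → Hv →ₗ[ℝ] Hx) (b : Fin s → ℝ) (Δt : ℝ)
    (S0 S1 : Fin p → Fin q → ℝ)
    (hS : ∀ k l, S1 k l = S0 k l + Δt * ∑ i, b i * ⟪F i (Vhat l), Xbar k⟫)
    (φ : (Fin p → Fin q → ℝ) → Hx)
    (hφ : ∀ S, φ S = ∑ k, ∑ l, (⟪Vhat l, U⟫ * S k l) • Xbar k) :
    φ S1 = φ S0 + Δt • ∑ k, ⟪∑ i, b i • F i U, Xbar k⟫ • Xbar k := by
  have key : ∀ k : Fin p, ⟪∑ i, b i • F i U, Xbar k⟫ =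
      ∑ l, ⟪Vhat l, U⟫ * ∑ i, b i * ⟪F i (Vhat l), Xbar k⟫ := by
    intro k
    conv_lhs => rw [hU]
    simp only [map_sum, map_smul, sum_inner, real_inner_smul_left, smul_eq_mul,
      Finset.mul_sum, real_inner_comm U]
    rw [Finset.sum_comm]
    exact Finset.sum_congr rfl fun l _ => Finset.sum_congr rfl fun i _ => by ring
  rw [hφ, hφ]
  simp only [hS, mul_add, add_smul, Finset.sum_add_distrib]
  congr 1
  rw [Finset.smul_sum]
  refine Finset.sum_congr rfl fun k _ => ?_
  rw [key, smul_smul, Finset.mul_sum, ← Finset.sum_smul]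
  congr 1
  exact Finset.sum_congr rfl fun l _ => by ring
end

section
/- Assume in addition that the Runge–Kutta flux ∑_i b i • F i U lies in the linear span of {X̄ k : k ∈ Fin p} (the additional basis augmentation of the conservative BUG integrator). Then the discrete local conservation law holds: φ(S¹) = φ(S⁰) + Δt • ∑_i b i • F i U. -/
open RealInnerProductSpace

lemma proj_span_eq {Hx : Type*} [NormedAddCommGroup Hx] [InnerProductSpace ℝ Hx]
    {p : ℕ} (Xbar : Fin p → Hx)
    (hX : ∀ i j, ⟪Xbar i, Xbar j⟫ = if i = j then 1 else 0)
    (v : Hx) (hv : v ∈ Submodule.span ℝ (Set.range Xbar)) :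
    ∑ k, ⟪v, Xbar k⟫ • Xbar k = v := by
  induction hv using Submodule.span_induction with
  | mem x hx =>
      obtain ⟨j, rfl⟩ := hx
      simp [hX, Finset.sum_ite_eq, ite_smul]
  | zero => simp
  | add x y _ _ hx hy =>
      simp only [inner_add_left, add_smul, Finset.sum_add_distrib, hx, hy]
  | smul a x _ hx =>
      simp only [real_inner_smul_left, mul_smul, ← Finset.smul_sum, hx]

/-- If additionally the Runge–Kutta flux `∑ i, b i • F i U` lies in
the span of the augmented spatial basis `Xbar` (the basis augmentation of the
conservative BUG integrator), the discrete local conservation law holds. -/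
theorem sStep_local_conservation
    {Hx Hv : Type*} [NormedAddCommGroup Hx] [InnerProductSpace ℝ Hx]
    [NormedAddCommGroup Hv] [InnerProductSpace ℝ Hv]
    {p q s : ℕ} (Xbar : Fin p → Hx) (Vhat : Fin q → Hv)
    (hX : ∀ i j, ⟪Xbar i, Xbar j⟫ = if i = j then 1 else 0)
    (hV : ∀ i j, ⟪Vhat i, Vhat j⟫ = if i = j then 1 else 0)
    (U : Hv) (hU : U = ∑ l, ⟪U, Vhat l⟫ • Vhat l)
    (F : Fin s → Hv →ₗ[ℝ] Hx) (b : Fin s → ℝ) (Δt : ℝ)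
    (S0 S1 : Fin p → Fin q → ℝ)
    (hS : ∀ k l, S1 k l = S0 k l + Δt * ∑ i, b i * ⟪F i (Vhat l), Xbar k⟫)
    (φ : (Fin p → Fin q → ℝ) → Hx)
    (hφ : ∀ S, φ S = ∑ k, ∑ l, (⟪Vhat l, U⟫ * S k l) • Xbar k)
    (hflux : (∑ i, b i • F i U) ∈ Submodule.span ℝ (Set.range Xbar)) :
    φ S1 = φ S0 + Δt • ∑ i, b i • F i U := by
  set G : Hx := ∑ i, b i • F i U with hG
  have hGk : ∀ k, ⟪G, Xbar k⟫ = ∑ l, ∑ i, ⟪Vhat l, U⟫ * (b i * ⟪F i (Vhat l), Xbar k⟫) := by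
    intro k
    rw [hG, sum_inner]
    rw [Finset.sum_comm]
    congr 1
    ext i
    rw [real_inner_smul_left]
    conv_lhs => rw [hU]
    rw [map_sum, sum_inner, Finset.mul_sum]
    congr 1
    ext l
    rw [map_smul, real_inner_smul_left, real_inner_comm U]
    ring
  have hproj : ∑ k, ⟪G, Xbar k⟫ • Xbar k = G := proj_span_eq Xbar hX G hflux
  calc φ S1 = ∑ k, ∑ l, (⟪Vhat l, U⟫ * S0 k l) • Xbar k
        + ∑ k, (∑ l, ∑ i, ⟪Vhat l, U⟫ * (b i * ⟪F i (Vhat l), Xbar k⟫)) • (Δt • Xbar k) := by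
        rw [hφ]
        rw [← Finset.sum_add_distrib]
        congr 1
        ext k
        rw [Finset.sum_smul, ← Finset.sum_add_distrib]
        congr 1
        ext l
        rw [hS, mul_add, add_smul, Finset.sum_smul]
        congr 2
        simp only [smul_smul]
        rw [← Finset.sum_smul]
        congr 1
        simp only [Finset.mul_sum]
        exact Finset.sum_congr rfl (fun i _ => by ring)
    _ = φ S0 + Δt • G := by
        rw [hφ]
        congr 1
        rw [← hproj, Finset.smul_sum]
        congr 1
        ext k
        rw [hGk, smul_comm, Finset.sum_smul]
end

section
/- Then F U lies in the linear span of {X̂ k : k ∈ Fin p}, and consequently ∑_k ⟪F U, X̂ k⟫ • X̂ k = F U; that is, the flux ⟨F, U⟩_v is exactly reproduced by the orthogonal projection onto the augmented spatial basis of the augmented BUG integrator with forward Euler updates, so no additional basis augmentation is needed for conservation. -/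
open RealInnerProductSpace

lemma proj_of_mem_span
    {Hx : Type*} [NormedAddCommGroup Hx] [InnerProductSpace ℝ Hx]
    {p : ℕ} (Xhat : Fin p → Hx)
    (hX : ∀ i j, ⟪Xhat i, Xhat j⟫ = if i = j then 1 else 0)
    {x : Hx} (hx : x ∈ Submodule.span ℝ (Set.range Xhat)) :
    (∑ k, ⟪x, Xhat k⟫ • Xhat k) = x := by
  induction hx using Submodule.span_induction with
  | mem y hy =>
    obtain ⟨i, rfl⟩ := hy
    have : ∀ k, ⟪Xhat i, Xhat k⟫ • Xhat k = if i = k then Xhat i else 0 := by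
      intro k
      rw [hX]
      by_cases h : i = k <;> simp [h]
    simp only [this]
    simp
  | zero => simp
  | add y z _ _ hy hz =>
    simp only [inner_add_left, add_smul, Finset.sum_add_distrib, hy, hz]
  | smul c y _ hy =>
    simp only [real_inner_smul_left, ← smul_smul, ← Finset.smul_sum, hy]

/-- For the augmented BUG integrator with forward Euler updates,
the flux `F U` lies in the span of the augmented spatial basis `Xhat` (which
spans `K⁰ i` and `K¹ i`), and hence is exactly reproduced by the orthogonal
projection onto that basis; no additional basis augmentation is needed. -/
theorem augmentedBUG_euler_flux_in_span
    {Hx Hv : Type*} [NormedAddCommGroup Hx] [InnerProductSpace ℝ Hx]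
    [NormedAddCommGroup Hv] [InnerProductSpace ℝ Hv]
    {r p : ℕ} (V : Fin r → Hv)
    (hV : ∀ i j, ⟪V i, V j⟫ = if i = j then 1 else 0)
    (U : Hv) (hU : U = ∑ i, ⟪U, V i⟫ • V i)
    (F : Hv →ₗ[ℝ] Hx) (Δt : ℝ) (hΔt : Δt ≠ 0)
    (K0 K1 : Fin r → Hx)
    (hK : ∀ i, K1 i = K0 i + Δt • F (V i))
    (Xhat : Fin p → Hx)
    (hX : ∀ i j, ⟪Xhat i, Xhat j⟫ = if i = j then 1 else 0)
    (hK0span : ∀ i, K0 i ∈ Submodule.span ℝ (Set.range Xhat))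
    (hK1span : ∀ i, K1 i ∈ Submodule.span ℝ (Set.range Xhat)) :
    F U ∈ Submodule.span ℝ (Set.range Xhat) ∧
      (∑ k, ⟪F U, Xhat k⟫ • Xhat k) = F U := by
  have hFV : ∀ i, F (V i) ∈ Submodule.span ℝ (Set.range Xhat) := by
    intro i
    have h : F (V i) = Δt⁻¹ • (K1 i - K0 i) := by
      rw [hK i]; rw [add_sub_cancel_left, smul_smul, inv_mul_cancel₀ hΔt, one_smul]
    rw [h]
    exact Submodule.smul_mem _ _ (Submodule.sub_mem _ (hK1span i) (hK0span i))
  have hmem : F U ∈ Submodule.span ℝ (Set.range Xhat) := by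
    rw [hU, map_sum]
    refine Submodule.sum_mem _ fun i _ => ?_
    rw [map_smul]
    exact Submodule.smul_mem _ _ (hFV i)
  exact ⟨hmem, proj_of_mem_span Xhat hX hmem⟩
end

section
/- Assume F₂ (V̂ i) lies in the linear span of {X̂ k : k ∈ Fin p} for every i (as guaranteed by the midpoint BUG basis construction X̂ = ortho(Xⁿ, K(t_{n+1}), ⟨F(Ŷ^{n+1/2}), V̂^{n+1/2}⟩_v)). Then the midpoint S-step update S¹ k l = S⁰ k l + Δt * ⟪F₂ (V̂ l), X̂ k⟫ satisfies the discrete local conservation law φ(S¹) = φ(S⁰) + Δt • F₂ U, without any additional basis augmentation. -/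
open RealInnerProductSpace

lemma span_orthonormal_expand {H : Type*} [NormedAddCommGroup H] [InnerProductSpace ℝ H]
    {p : ℕ} (X : Fin p → H) (hX : ∀ i j, ⟪X i, X j⟫ = if i = j then 1 else 0)
    {v : H} (hv : v ∈ Submodule.span ℝ (Set.range X)) :
    v = ∑ k, ⟪v, X k⟫ • X k := by
  obtain ⟨c, hc⟩ := (Submodule.mem_span_range_iff_exists_fun ℝ).1 hv
  have hck : ∀ k, ⟪v, X k⟫ = c k := by
    intro k
    rw [← hc, sum_inner]
    simp only [real_inner_smul_left, hX]
    simp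
  simp only [hck]
  exact hc.symm

/-- For the midpoint BUG integrator, if the midpoint flux stages
`F₂ (Vhat i)` lie in the span of the augmented spatial basis `Xhat`, then the
midpoint S-step update satisfies the discrete local conservation law without
any additional basis augmentation. -/
theorem midpointBUG_local_conservation
    {Hx Hv : Type*} [NormedAddCommGroup Hx] [InnerProductSpace ℝ Hx]
    [NormedAddCommGroup Hv] [InnerProductSpace ℝ Hv]
    {p q : ℕ} (Xhat : Fin p → Hx) (Vhat : Fin q → Hv)
    (hX : ∀ i j, ⟪Xhat i, Xhat j⟫ = if i = j then 1 else 0)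
    (hV : ∀ i j, ⟪Vhat i, Vhat j⟫ = if i = j then 1 else 0)
    (U : Hv) (hU : U = ∑ l, ⟪U, Vhat l⟫ • Vhat l)
    (F₂ : Hv →ₗ[ℝ] Hx) (Δt : ℝ)
    (hstage : ∀ i, F₂ (Vhat i) ∈ Submodule.span ℝ (Set.range Xhat))
    (S0 S1 : Fin p → Fin q → ℝ)
    (hS : ∀ k l, S1 k l = S0 k l + Δt * ⟪F₂ (Vhat l), Xhat k⟫)
    (φ : (Fin p → Fin q → ℝ) → Hx)
    (hφ : ∀ S, φ S = ∑ k, ∑ l, (⟪Vhat l, U⟫ * S k l) • Xhat k) :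
    φ S1 = φ S0 + Δt • F₂ U := by
  have hFU : Δt • F₂ U = ∑ k, ∑ l, (⟪Vhat l, U⟫ * (Δt * ⟪F₂ (Vhat l), Xhat k⟫)) • Xhat k := by
    rw [Finset.sum_comm]
    conv_lhs => rw [hU]
    rw [map_sum, Finset.smul_sum]
    refine Finset.sum_congr rfl fun l _ => ?_
    rw [map_smul]
    conv_lhs => rw [span_orthonormal_expand Xhat hX (hstage l)]
    rw [Finset.smul_sum, Finset.smul_sum]
    refine Finset.sum_congr rfl fun k _ => ?_
    rw [smul_smul, smul_smul]
    congr 1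
    rw [real_inner_comm U (Vhat l)]
    ring
  rw [hφ, hφ, hFU, ← Finset.sum_add_distrib]
  refine Finset.sum_congr rfl fun k _ => ?_
  rw [← Finset.sum_add_distrib]
  refine Finset.sum_congr rfl fun l _ => ?_
  rw [hS, ← add_smul]
  ring_nf
end

section
/- The reconstructed conserved quantity of the parallel BUG integrator, φ = ∑_{a,b} ⟪X̂⁰ a, K b⟫ * ⟪V̂⁰ b, U⟫ • X̂⁰ a + ∑_{a,j} ⟪L a, Ṽ j⟫ * ⟪Ṽ j, U⟫ • X̂⁰ a + ∑_{c,b} ⟪X̃ c, K b⟫ * ⟪V̂⁰ b, U⟫ • X̃ c, equals ∑_b ⟪V̂⁰ b, U⟫ • K b; that is, the conserved quantity of the augmented parallel solution is determined solely by the K-step and the old velocity basis. -/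
open RealInnerProductSpace

lemma aux_expand {E : Type*} [NormedAddCommGroup E] [InnerProductSpace ℝ E]
    {ι : Type*} [Fintype ι] [DecidableEq ι] (f : ι → E)
    (ho : ∀ i j : ι, ⟪f i, f j⟫ = if i = j then 1 else 0)
    {v : E} (hv : v ∈ Submodule.span ℝ (Set.range f)) :
    ∑ i, ⟪f i, v⟫ • f i = v := by
  obtain ⟨c, rfl⟩ := (Submodule.mem_span_range_iff_exists_fun ℝ).mp hv
  have : ∀ i, ⟪f i, ∑ j, c j • f j⟫ = c i := by
    intro i
    rw [inner_sum]
    simp only [real_inner_smul_right, ho]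
    simp
  simp [this]

/-- For the parallel BUG integrator, the conserved quantity
reconstructed from the augmented coefficient matrix (with blocks
`⟪X0 a, K b⟫`, `⟪L a, Vt j⟫`, `⟪Xt c, K b⟫` and a zero block) equals
`∑ b, ⟪V0 b, U⟫ • K b`; it is determined solely by the K-step and the old
velocity basis. -/
theorem parallelBUG_conserved_quantity
    {Hx Hv : Type*} [NormedAddCommGroup Hx] [InnerProductSpace ℝ Hx]
    [NormedAddCommGroup Hv] [InnerProductSpace ℝ Hv]
    {p q p' q' : ℕ} (X0 : Fin p → Hx) (Xt : Fin q → Hx)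
    (V0 : Fin p' → Hv) (Vt : Fin q' → Hv)
    (hXo : ∀ i j : Fin p ⊕ Fin q,
      ⟪Sum.elim X0 Xt i, Sum.elim X0 Xt j⟫ = if i = j then 1 else 0)
    (hVo : ∀ i j : Fin p' ⊕ Fin q',
      ⟪Sum.elim V0 Vt i, Sum.elim V0 Vt j⟫ = if i = j then 1 else 0)
    (K : Fin p' → Hx)
    (hK : ∀ b, K b ∈ Submodule.span ℝ (Set.range (Sum.elim X0 Xt)))
    (L : Fin p → Hv)
    (U : Hv) (hU : ∀ j, ⟪Vt j, U⟫ = 0) :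
    ((∑ a, ∑ b, (⟪X0 a, K b⟫ * ⟪V0 b, U⟫) • X0 a)
      + (∑ a, ∑ j, (⟪L a, Vt j⟫ * ⟪Vt j, U⟫) • X0 a)
      + (∑ c, ∑ b, (⟪Xt c, K b⟫ * ⟪V0 b, U⟫) • Xt c))
    = ∑ b, ⟪V0 b, U⟫ • K b := by
  have h2 : (∑ a, ∑ j, (⟪L a, Vt j⟫ * ⟪Vt j, U⟫) • X0 a) = 0 := by
    simp [hU]
  rw [h2, add_zero]
  rw [Finset.sum_comm (f := fun a b => (⟪X0 a, K b⟫ * ⟪V0 b, U⟫) • X0 a),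
      Finset.sum_comm (f := fun c b => (⟪Xt c, K b⟫ * ⟪V0 b, U⟫) • Xt c),
      ← Finset.sum_add_distrib]
  refine Finset.sum_congr rfl fun b _ => ?_
  have := aux_expand (Sum.elim X0 Xt) hXo (hK b)
  rw [Fintype.sum_sum_type] at this
  simp only [Sum.elim_inl, Sum.elim_inr] at this
  conv_rhs => rw [← this]
  rw [smul_add, Finset.smul_sum, Finset.smul_sum]
  congr 1 <;> refine Finset.sum_congr rfl fun a _ => ?_ <;>
    rw [smul_smul, mul_comm]
end

section
/- Then ∑_l ⟪V̂ l, U⟫ • K¹ l = ∑_l ⟪V̂ l, U⟫ • K⁰ l + Δt • ∑_i b i • F i U; that is, the conserved quantity reconstructed from the K-step of the parallel BUG integrator evolves according to the Runge–Kutta discretization of the local conservation law ∂_t φ = ⟨F, U⟩_v. -/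
open RealInnerProductSpace

/-- The conserved quantity reconstructed from the Runge–Kutta
K-step of the parallel BUG integrator evolves according to the Runge–Kutta
discretization of the local conservation law `∂ₜ φ = ⟨F, U⟩_v`. -/
theorem parallelBUG_Kstep_conservation
    {Hx Hv : Type*} [NormedAddCommGroup Hx] [InnerProductSpace ℝ Hx]
    [NormedAddCommGroup Hv] [InnerProductSpace ℝ Hv]
    {q s : ℕ} (Vhat : Fin q → Hv)
    (hV : ∀ i j, ⟪Vhat i, Vhat j⟫ = if i = j then 1 else 0)
    (U : Hv) (hU : U = ∑ l, ⟪U, Vhat l⟫ • Vhat l)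
    (F : Fin s → Hv →ₗ[ℝ] Hx) (b : Fin s → ℝ) (Δt : ℝ)
    (K0 K1 : Fin q → Hx)
    (hK : ∀ l, K1 l = K0 l + Δt • ∑ i, b i • F i (Vhat l)) :
    (∑ l, ⟪Vhat l, U⟫ • K1 l)
      = (∑ l, ⟪Vhat l, U⟫ • K0 l) + Δt • ∑ i, b i • F i U := by
  have hFU : ∀ i : Fin s, F i U = ∑ l, ⟪Vhat l, U⟫ • F i (Vhat l) := by
    intro i
    conv_lhs => rw [hU]
    rw [map_sum]
    exact Finset.sum_congr rfl fun l _ => by rw [map_smul, real_inner_comm]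
  simp only [hK, smul_add, Finset.sum_add_distrib]
  congr 1
  simp only [hFU, Finset.smul_sum, Finset.sum_comm (γ := Fin s)]
  exact Finset.sum_congr rfl fun l _ => Finset.sum_congr rfl fun i _ => by
    rw [smul_comm, smul_comm (b i)]
end

section
/- Then for every t, the map t ↦ ∑_l ⟪V̂ l, U⟫ • K t l has derivative (F t) U at t; that is, the conserved quantity φ_S(t) = ∑_l ⟪V̂ l, U⟫ • K t l reconstructed from the K-step of the parallel BUG integrator satisfies the exact local conservation law ∂_t φ_S(t) = ⟨F(t, Y_K(t)), U⟩_v. -/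
open RealInnerProductSpace

theorem HasDerivAt.sum_smul_map {𝕜 ι E F : Type*} [NontriviallyNormedField 𝕜]
    [AddCommGroup E] [Module 𝕜 E] [NormedAddCommGroup F] [NormedSpace 𝕜 F]
    (A : E →ₗ[𝕜] F) (s : Finset ι) (c : ι → 𝕜) (v : ι → E) {f : ι → 𝕜 → F} {t : 𝕜}
    (hf : ∀ i ∈ s, HasDerivAt (f i) (A (v i)) t) :
    HasDerivAt (fun τ => ∑ i ∈ s, c i • f i τ) (A (∑ i ∈ s, c i • v i)) t := by
  simp only [map_sum, map_smul]
  exact HasDerivAt.fun_sum fun i hi => (hf i hi).const_smul (c i)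

theorem parallelBUG_Kstep_continuous_conservation_general
    {Hx Hv : Type*} [NormedAddCommGroup Hx] [NormedSpace ℝ Hx]
    [NormedAddCommGroup Hv] [InnerProductSpace ℝ Hv]
    {q : ℕ} (Vhat : Fin q → Hv)
    (U : Hv) (hU : U = ∑ l, ⟪U, Vhat l⟫ • Vhat l)
    (F : ℝ → (Hv →L[ℝ] Hx))
    (K : ℝ → Fin q → Hx)
    (hK : ∀ l t, HasDerivAt (fun τ => K τ l) ((F t) (Vhat l)) t) :
    ∀ t, HasDerivAt (fun τ => ∑ l, ⟪Vhat l, U⟫ • K τ l) ((F t) U) t := by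
  intro t
  have hU' : ∑ l, ⟪Vhat l, U⟫ • Vhat l = U := by
    simp_rw [real_inner_comm U]
    exact hU.symm
  have h := HasDerivAt.sum_smul_map (F t : Hv →ₗ[ℝ] Hx) Finset.univ (fun l => ⟪Vhat l, U⟫) Vhat
    fun l _ => hK l t
  rwa [hU', ContinuousLinearMap.coe_coe] at h

/-- Along the continuous K-step of the parallel BUG integrator,
the reconstructed conserved quantity `φ_S(t) = ∑ l, ⟪Vhat l, U⟫ • K t l`
satisfies the exact local conservation law `∂ₜ φ_S(t) = (F t) U`. -/
theorem parallelBUG_Kstep_continuous_conservation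
    {Hx Hv : Type*} [NormedAddCommGroup Hx] [NormedSpace ℝ Hx]
    [NormedAddCommGroup Hv] [InnerProductSpace ℝ Hv]
    {q : ℕ} (Vhat : Fin q → Hv)
    (hV : ∀ i j, ⟪Vhat i, Vhat j⟫ = if i = j then 1 else 0)
    (U : Hv) (hU : U = ∑ l, ⟪U, Vhat l⟫ • Vhat l)
    (F : ℝ → (Hv →L[ℝ] Hx))
    (K : ℝ → Fin q → Hx)
    (hK : ∀ l t, HasDerivAt (fun τ => K τ l) ((F t) (Vhat l)) t) :
    ∀ t, HasDerivAt (fun τ => ∑ l, ⟪Vhat l, U⟫ • K τ l) ((F t) U) t :=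
  parallelBUG_Kstep_continuous_conservation_general Vhat U hU F K hK
end
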